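/- arXiv:1412.1147 — 4 statements merged into one kernel-verified Lean document; each statement's English description precedes it below -/
import Mathlib

section
/- Let p be a prime, let A be an associative ring, and let z, z' ∈ A be such that z ≡ z' mod pA and the image of z in A/pA lies in the center Z(A/pA). Then for every k ≥ 0, z^{p^k} ≡ z'^{p^k} mod p^{k+1} A. -/
/-!
If `x` is central modulo `p` and `y = x + e` with `e = p^(n+1) u`, then modulo `p^(n+2)` the
element `e` commutes with `x` (as `xu - ux ∈ pA`), and `e² = 0`, `p e = 0`. Hence
`(x + e)^p = x^p + p x^(p-1) e = x^p` there, i.e. `x ≡ y mod p^(n+1)` implies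
`x^p ≡ y^p mod p^(n+2)`. Starting from `z ≡ z' mod p` and iterating, with `z^(p^k)` still central
modulo `p`, gives the theorem.
-/

/-- The congruence on `A` corresponding to the two-sided ideal `p^k A`
generated by `p^k`; its quotient is the ring `A/p^k A`. -/
def pPowCon (p k : ℕ) (A : Type*) [Ring A] : RingCon A :=
  (TwoSidedIdeal.span {(p : A) ^ k}).ringCon

section

variable {A : Type*} [Ring A]

theorem Commute.add_pow_of_mul_self_eq_zero {x e : A} (h : Commute x e) (he : e * e = 0)
    (m : ℕ) : (x + e) ^ m = x ^ m + m * x ^ (m - 1) * e := by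
  induction m with
  | zero => simp
  | succ m ih =>
    rcases m with _ | m
    · simp
    rw [pow_succ, ih, add_mul, mul_add, mul_add, mul_assoc _ e x, ← h.eq, mul_assoc _ e e, he]
    simp only [mul_zero, add_zero, Nat.add_sub_cancel]
    rw [← pow_succ, ← mul_assoc, mul_assoc _ (x ^ m), ← pow_succ, Nat.cast_succ (m + 1),
      add_mul, add_mul, one_mul]
    abel

theorem TwoSidedIdeal.mem_span_singleton_iff_dvd_of_commute {c x : A} (hc : ∀ a, Commute c a) :
    x ∈ span {c} ↔ c ∣ x := by
  refine ⟨fun hx => ?_, fun ⟨a, hxa⟩ => hxa ▸ mul_mem_right _ _ _ (subset_span rfl)⟩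
  induction hx using span_induction with
  | mem x hx => exact hx ▸ dvd_rfl
  | zero => exact dvd_zero c
  | add _ _ _ _ hx hy => exact dvd_add hx hy
  | neg _ _ hx => exact hx.neg_right
  | left_absorb a _ _ hx =>
    obtain ⟨b, rfl⟩ := hx
    exact ⟨a * b, by rw [← mul_assoc, ← (hc a).eq, mul_assoc]⟩
  | right_absorb b _ _ hx => exact hx.mul_right b

namespace pPowCon

theorem mk'_eq_iff {p n : ℕ} {x y : A} :
    (pPowCon p n A).mk' x = (pPowCon p n A).mk' y ↔ (p : A) ^ n ∣ x - y :=
  (RingCon.eq _).trans <| (TwoSidedIdeal.rel_iff _ _ _).trans <|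
    TwoSidedIdeal.mem_span_singleton_iff_dvd_of_commute fun a => (Nat.cast_commute p a).pow_left n

theorem natCast_pow_eq_zero (p n : ℕ) : (p : (pPowCon p n A).Quotient) ^ n = 0 := by
  rw [← map_natCast (pPowCon p n A).mk', ← map_pow, ← map_zero (pPowCon p n A).mk', mk'_eq_iff,
    sub_zero]

theorem natCast_dvd_mul_sub_mul_of_mem_center {p : ℕ} {x : A}
    (hx : (pPowCon p 1 A).mk' x ∈ Subring.center (pPowCon p 1 A).Quotient) (a : A) :
    (p : A) ∣ x * a - a * x := by
  have h := Subring.mem_center_iff.mp hx ((pPowCon p 1 A).mk' a)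
  rw [← map_mul, ← map_mul, mk'_eq_iff, pow_one] at h
  exact dvd_sub_comm.mp h

end pPowCon

theorem natCast_pow_succ_dvd_pow_sub_pow {p n : ℕ} {x y : A}
    (hx : (pPowCon p 1 A).mk' x ∈ Subring.center (pPowCon p 1 A).Quotient)
    (hxy : (p : A) ^ (n + 1) ∣ x - y) : (p : A) ^ (n + 2) ∣ x ^ p - y ^ p := by
  obtain ⟨u, hu⟩ := dvd_sub_comm.mp hxy
  obtain ⟨v, hv⟩ := pPowCon.natCast_dvd_mul_sub_mul_of_mem_center hx u
  set f := (pPowCon p (n + 2) A).mk'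
  have hc : ∀ b, Commute (p : (pPowCon p (n + 2) A).Quotient) b := Nat.cast_commute p
  have hpow := pPowCon.natCast_pow_eq_zero (A := A) p (n + 2)
  set e := (p : (pPowCon p (n + 2) A).Quotient) ^ (n + 1) * f u
  have hy : f y = f x + e := by
    rw [← sub_eq_iff_eq_add', ← map_sub, hu, map_mul, map_pow, map_natCast]
  have hxe : Commute (f x) e := by
    have hxu : f x * f u = f u * f x + p * f v := by
      rw [← sub_eq_iff_eq_add', ← map_mul, ← map_mul, ← map_sub, hv, map_mul, map_natCast]
    calc f x * e = p ^ (n + 1) * (f x * f u) := by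
          rw [← mul_assoc, ← ((hc _).pow_left _).eq, mul_assoc]
      _ = e * f x + p ^ (n + 2) * f v := by
          rw [hxu, mul_add, mul_assoc, ← mul_assoc _ (p : (pPowCon p (n + 2) A).Quotient),
            ← pow_succ]
      _ = e * f x := by rw [hpow, zero_mul, add_zero]
  have hpe : (p : (pPowCon p (n + 2) A).Quotient) * e = 0 := by
    rw [← mul_assoc, ← pow_succ', hpow, zero_mul]
  have hee : e * e = 0 :=
    calc e * e = e * p ^ (n + 1) * f u := (mul_assoc e _ _).symm
      _ = p ^ (n + 1) * e * f u := by rw [((hc e).pow_left _).eq]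
      _ = 0 := by rw [pow_succ, mul_assoc _ _ e, hpe, mul_zero, zero_mul]
  refine pPowCon.mk'_eq_iff.mp ?_
  rw [map_pow, map_pow, hy, hxe.add_pow_of_mul_self_eq_zero hee, (hc _).eq, mul_assoc, hpe,
    mul_zero, add_zero]

end

theorem pow_pPow_congruent_mod_pPow_succ_general
    (p : ℕ) (A : Type*) [Ring A] (z z' : A)
    (hzz' : (pPowCon p 1 A).mk' z = (pPowCon p 1 A).mk' z')
    (hz : (pPowCon p 1 A).mk' z ∈ Subring.center (pPowCon p 1 A).Quotient)
    (k : ℕ) :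
    (pPowCon p (k + 1) A).mk' (z ^ p ^ k) = (pPowCon p (k + 1) A).mk' (z' ^ p ^ k) := by
  rw [pPowCon.mk'_eq_iff] at hzz' ⊢
  induction k with
  | zero => simpa using hzz'
  | succ k ih =>
    have hzk : (pPowCon p 1 A).mk' (z ^ p ^ k) ∈ Subring.center (pPowCon p 1 A).Quotient :=
      map_pow (pPowCon p 1 A).mk' z _ ▸ Subring.pow_mem _ hz _
    rw [pow_succ p k, pow_mul, pow_mul]
    exact natCast_pow_succ_dvd_pow_sub_pow hzk ih

/-- Let `p` be a prime, `A` an associative ring, and `z, z' ∈ A` with `z ≡ z' mod pA`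
and the image of `z` in `A/pA` central.  Then for every `k ≥ 0`,
`z^{p^k} ≡ z'^{p^k} mod p^{k+1} A`. -/
theorem pow_pPow_congruent_mod_pPow_succ
    (p : ℕ) (hp : p.Prime) (A : Type*) [Ring A] (z z' : A)
    (hzz' : (pPowCon p 1 A).mk' z = (pPowCon p 1 A).mk' z')
    (hz : (pPowCon p 1 A).mk' z ∈ Subring.center (pPowCon p 1 A).Quotient)
    (k : ℕ) :
    (pPowCon p (k + 1) A).mk' (z ^ p ^ k) = (pPowCon p (k + 1) A).mk' (z' ^ p ^ k) :=
  pow_pPow_congruent_mod_pPow_succ_general p A z z' hzz' hz k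
end

section
/- Let p be a prime, let A be an associative ring, and let z ∈ A be such that the image of z in A/pA lies in the center Z(A/pA). Then for every n ≥ 1, the image of z^{p^{n-1}} in A/p^n A lies in the center Z(A/p^n A). -/
/-- Membership in the two-sided ideal generated by a central element. -/
lemma mem_central_span_iff {A : Type*} [Ring A] (c : A) (hc : ∀ a, a * c = c * a) (x : A) :
    x ∈ TwoSidedIdeal.span {c} ↔ ∃ a, x = c * a := by
  constructor
  · intro h
    let I : TwoSidedIdeal A := TwoSidedIdeal.mk' {x | ∃ a, x = c * a}
      ⟨0, (mul_zero c).symm⟩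
      (fun hx hy => by
        obtain ⟨a, rfl⟩ := hx; obtain ⟨b, rfl⟩ := hy
        exact ⟨a + b, (mul_add c a b).symm⟩)
      (fun hx => by obtain ⟨a, rfl⟩ := hx; exact ⟨-a, (mul_neg c a).symm⟩)
      (fun {u v} hv => by
        obtain ⟨a, rfl⟩ := hv
        exact ⟨u * a, by rw [← mul_assoc, hc u, mul_assoc]⟩)
      (fun {u v} hu => by
        obtain ⟨a, rfl⟩ := hu
        exact ⟨a * v, by rw [mul_assoc]⟩)
    have h2 := TwoSidedIdeal.mem_span_iff.mp h I
      (by rintro y rfl; exact ⟨1, by rw [sub_zero, mul_one]⟩)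
    simpa [I, TwoSidedIdeal.mem_mk'] using h2
  · rintro ⟨a, rfl⟩
    exact TwoSidedIdeal.mul_mem_right _ _ _ (TwoSidedIdeal.subset_span rfl)

/-- Key commutator computation, phrased with natural number scalars. -/
lemma key_comm {A : Type*} [Ring A] (p : ℕ) (hp1 : 1 ≤ p) (z : A)
    (hz : ∀ a : A, ∃ c, z * a - a * z = p • c) (n : ℕ) :
    ∀ a : A, ∃ c, z ^ p ^ n * a - a * z ^ p ^ n = p ^ (n + 1) • c := by
  induction n with
  | zero => simpa using hz
  | succ n ih =>
    set w := z ^ p ^ n with hw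
    have hwp : ∀ a : A, ∃ d, w * a - a * w = p • d := by
      intro a
      obtain ⟨c, hc⟩ := ih a
      exact ⟨p ^ n • c, by rw [hc, smul_smul, pow_succ']⟩
    intro a
    obtain ⟨c, hc⟩ := ih a
    have hc' : w * a = a * w + p ^ (n + 1) • c := by
      rw [← hc]; abel
    obtain ⟨d, hd⟩ := hwp c
    have hwc : ∀ x : A, w * (c * x) = c * (w * x) + p • (d * x) := by
      intro x
      have hd' : w * c = c * w + p • d := by rw [← hd]; abel
      rw [← mul_assoc, hd', add_mul, mul_assoc, smul_mul_assoc]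
    have main : ∀ m : ℕ, ∃ e, w ^ (m + 1) * a - a * w ^ (m + 1)
        = p ^ (n + 1) • ((m + 1) • (c * w ^ m) + p • e) := by
      intro m
      induction m with
      | zero => exact ⟨0, by simpa using hc⟩
      | succ m ihm =>
        obtain ⟨e, ihm⟩ := ihm
        refine ⟨(m + 1) • (d * w ^ m) + w * e, ?_⟩
        have expand : w ^ (m + 1 + 1) * a - a * w ^ (m + 1 + 1)
            = w * (w ^ (m + 1) * a - a * w ^ (m + 1)) + (w * a - a * w) * w ^ (m + 1) := by
          rw [pow_succ' w (m + 1)]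
          noncomm_ring
        rw [expand, ihm, hc]
        have step : w * (c * w ^ m) = c * w ^ (m + 1) + p • (d * w ^ m) := by
          rw [hwc (w ^ m), pow_succ']
        simp only [mul_add, mul_smul_comm, smul_mul_assoc, step, smul_add]
        module
    obtain ⟨e, he⟩ := main (p - 1)
    refine ⟨c * w ^ (p - 1) + e, ?_⟩
    have h1 : p - 1 + 1 = p := Nat.succ_pred_eq_of_pos hp1
    have h2 : w ^ p = z ^ p ^ (n + 1) := by
      rw [hw, ← pow_mul, ← pow_succ]
    rw [h1] at he
    rw [← h2, he, smul_add, smul_smul, smul_smul, ← pow_succ, smul_add]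

/-- Let `p` be a prime, `A` an associative ring, and `z ∈ A` whose image in `A/pA` is
central.  Then for every `n ≥ 1`, the image of `z^{p^{n-1}}` in `A/p^n A` lies in the
center `Z(A/p^n A)`. -/
theorem pow_pPow_mem_center_quotient
    (p : ℕ) (hp : p.Prime) (A : Type*) [Ring A] (z : A)
    (hz : (pPowCon p 1 A).mk' z ∈ Subring.center (pPowCon p 1 A).Quotient)
    (n : ℕ) (hn : 1 ≤ n) :
    (pPowCon p n A).mk' (z ^ p ^ (n - 1)) ∈ Subring.center (pPowCon p n A).Quotient := by
  have hcast : ∀ (k : ℕ) (a : A), a * (p : A) ^ k = (p : A) ^ k * a := fun k a =>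
    ((Nat.cast_commute p a).pow_left k).symm.eq
  -- translate the hypothesis
  rw [Subring.mem_center_iff] at hz
  have hz' : ∀ a : A, ∃ c, z * a - a * z = p • c := by
    intro a
    have := hz ((pPowCon p 1 A).mk' a)
    rw [← map_mul, ← map_mul] at this
    have h2 : a * z - z * a ∈ TwoSidedIdeal.span {(p : A) ^ 1} :=
      (TwoSidedIdeal.rel_iff _ _ _).mp (Quotient.eq''.mp this)
    rw [mem_central_span_iff _ (hcast 1)] at h2
    obtain ⟨c, hc⟩ := h2
    refine ⟨-c, ?_⟩
    rw [show z * a - a * z = -(a * z - z * a) by abel, hc, pow_one, smul_neg,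
      nsmul_eq_mul]
  -- main result
  obtain ⟨m, rfl⟩ : ∃ m, n = m + 1 := ⟨n - 1, (Nat.succ_pred_eq_of_pos hn).symm⟩
  have key := key_comm p hp.one_lt.le z hz' m
  rw [Subring.mem_center_iff]
  intro g
  obtain ⟨a, rfl⟩ := Quotient.mk''_surjective (α := A) g
  have hmk : ∀ x : A, (Quotient.mk'' x : (pPowCon p (m + 1) A).Quotient)
      = (pPowCon p (m + 1) A).mk' x := fun _ => rfl
  rw [hmk, ← map_mul, ← map_mul]
  obtain ⟨c, hc⟩ := key a
  have hmem : a * z ^ p ^ (m + 1 - 1) - z ^ p ^ (m + 1 - 1) * a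
      ∈ TwoSidedIdeal.span {(p : A) ^ (m + 1)} := by
    rw [mem_central_span_iff _ (hcast (m + 1))]
    refine ⟨-c, ?_⟩
    simp only [Nat.add_sub_cancel]
    rw [show a * z ^ p ^ m - z ^ p ^ m * a = -(z ^ p ^ m * a - a * z ^ p ^ m) by abel, hc]
    simp [nsmul_eq_mul]
  exact Quotient.eq''.mpr ((TwoSidedIdeal.rel_iff _ _ _).mpr hmem)
end

section
/- Let p be an odd prime, let A be an associative ring in which p is not a zero divisor, and let n ≥ 1. Let z_1, …, z_n ∈ A/pA be central elements, and for each i let z̃_i and z̃'_i be two elements of A lifting z_i. Then Σ_{i=1}^n p^{i-1} (z̃_i)^{p^{n-i}} ≡ Σ_{i=1}^n p^{i-1} (z̃'_i)^{p^{n-i}} mod p^n A; moreover the common image of these sums in A/p^n A lies in the center Z(A/p^n A). -/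
section Aux

variable {A : Type*} [Ring A] {p : ℕ}

/-- The cast `p^m` is central. -/
lemma cast_pow_comm (m : ℕ) (x : A) : (p : A) ^ m * x = x * (p : A) ^ m :=
  ((Nat.cast_commute p x).pow_left m).eq

/-- The set `p^k A` as a two-sided ideal (using that `p^k` is central). -/
def pMulIdeal (p k : ℕ) (A : Type*) [Ring A] : TwoSidedIdeal A :=
  TwoSidedIdeal.mk' {x : A | ∃ a, x = (p : A) ^ k * a}
    ⟨0, by simp⟩
    (fun {x y} hx hy => by
      obtain ⟨a, rfl⟩ := hx; obtain ⟨b, rfl⟩ := hy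
      exact ⟨a + b, by rw [mul_add]⟩)
    (fun {x} hx => by
      obtain ⟨a, rfl⟩ := hx; exact ⟨-a, by rw [mul_neg]⟩)
    (fun {x y} hy => by
      obtain ⟨a, rfl⟩ := hy
      exact ⟨x * a, by rw [← mul_assoc, ← mul_assoc, cast_pow_comm]⟩)
    (fun {x y} hx => by
      obtain ⟨a, rfl⟩ := hx; exact ⟨a * y, by rw [mul_assoc]⟩)

lemma mem_pMulIdeal {k : ℕ} {x : A} :
    x ∈ pMulIdeal p k A ↔ ∃ a, x = (p : A) ^ k * a := by
  rw [pMulIdeal, TwoSidedIdeal.mem_mk']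
  rfl

/-- Membership in the two-sided ideal generated by the central element `p^k`. -/
lemma mem_span_pPow_iff (k : ℕ) (x : A) :
    x ∈ TwoSidedIdeal.span {(p : A) ^ k} ↔ ∃ a, x = (p : A) ^ k * a := by
  constructor
  · intro hx
    refine mem_pMulIdeal.mp (TwoSidedIdeal.mem_span_iff.mp hx (pMulIdeal p k A) ?_)
    rintro z rfl
    exact mem_pMulIdeal.mpr ⟨1, by rw [mul_one]⟩
  · rintro ⟨a, rfl⟩
    exact TwoSidedIdeal.mul_mem_right _ _ _ (TwoSidedIdeal.subset_span rfl)

/-- Commutation helper: `x * (p^m * y) - (p^m * y) * x = p^m * (x*y - y*x)`. -/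
lemma pow_cast_mul_sub (m : ℕ) (x y : A) :
    x * ((p : A) ^ m * y) - (p : A) ^ m * y * x = (p : A) ^ m * (x * y - y * x) := by
  rw [mul_sub, ← mul_assoc x, ← cast_pow_comm m x, mul_assoc, mul_assoc]

lemma pPow_mk'_eq_iff (k : ℕ) (x y : A) :
    (pPowCon p k A).mk' x = (pPowCon p k A).mk' y ↔
      ∃ a, x - y = (p : A) ^ k * a := by
  show (x : (pPowCon p k A).Quotient) = y ↔ _
  rw [RingCon.eq, show pPowCon p k A = (TwoSidedIdeal.span {(p : A) ^ k}).ringCon from rfl,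
    TwoSidedIdeal.rel_iff, mem_span_pPow_iff]

/-- `z` is central modulo `p`. -/
def CentralModP (p : ℕ) (z : A) : Prop :=
  ∀ a : A, ∃ b, z * a - a * z = (p : A) * b

lemma CentralModP.pow {z : A} (hz : CentralModP p z) (m : ℕ) :
    CentralModP p (z ^ m) := by
  induction m with
  | zero => intro a; exact ⟨0, by simp⟩
  | succ m ih =>
    intro a
    obtain ⟨b, hb⟩ := hz a
    obtain ⟨c, hc⟩ := ih a
    refine ⟨z ^ m * b + c * z, ?_⟩
    have key : z ^ (m + 1) * a - a * z ^ (m + 1)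
        = z ^ m * (z * a - a * z) + (z ^ m * a - a * z ^ m) * z := by
      rw [pow_succ]; noncomm_ring
    rw [key, hb, hc, mul_add, ← mul_assoc, ← mul_assoc,
      (Nat.cast_commute p (z ^ m)).eq, mul_assoc, mul_assoc]

/-- Commutator of a power, when the commutator `e` commutes with `x`. -/
lemma pow_comm_aux {B : Type*} [Ring B] {x a e : B} (hc : Commute x e)
    (h : x * a - a * x = e) :
    ∀ m : ℕ, x ^ (m + 1) * a - a * x ^ (m + 1) = (m + 1) • (x ^ m * e) := by
  intro m
  induction m with
  | zero => simpa using h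
  | succ m ih =>
    have key : x ^ (m + 2) * a - a * x ^ (m + 2)
        = x ^ (m + 1) * (x * a - a * x) + (x ^ (m + 1) * a - a * x ^ (m + 1)) * x := by
      rw [pow_succ]; noncomm_ring
    rw [key, h, ih, smul_mul_assoc, mul_assoc, ← hc.eq, ← mul_assoc, ← pow_succ,
      succ_nsmul (x ^ (m + 1) * e) (m + 1)]
    abel

/-- Key lemma 1: powers of a central-mod-`p` element become central modulo
higher powers of `p`. -/
lemma central_pow_comm {z : A} (hp : 0 < p) (hz : CentralModP p z) :
    ∀ k : ℕ, ∀ a : A, ∃ b, z ^ p ^ k * a - a * z ^ p ^ k = (p : A) ^ (k + 1) * b := by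
  intro k
  induction k with
  | zero =>
    intro a
    obtain ⟨b, hb⟩ := hz a
    exact ⟨b, by simpa using hb⟩
  | succ k ih =>
    intro a
    set w := z ^ p ^ k with hw
    have hwc : CentralModP p w := hz.pow _
    set f := (pPowCon p (k + 2) A).mk' with hf
    obtain ⟨b, hb⟩ := ih a
    set eA := w * a - a * w with heA
    -- `f w` commutes with `f eA`
    have hcomm : Commute (f w) (f eA) := by
      show f w * f eA = f eA * f w
      rw [← map_mul, ← map_mul, pPow_mk'_eq_iff]
      obtain ⟨c, hc⟩ := hwc b
      refine ⟨c, ?_⟩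
      have h1 : w * eA - eA * w = (p : A) ^ (k + 1) * (w * b - b * w) := by
        rw [hb]; exact pow_cast_mul_sub _ _ _
      rw [h1, hc, ← mul_assoc, ← pow_succ]
    have hcomm' : f w * f a - f a * f w = f eA := by
      rw [heA, map_sub, map_mul, map_mul]
    -- `p * eA` is divisible by `p^(k+2)`
    have hpe0 : f ((p : A) * eA) = 0 := by
      rw [show (0 : (pPowCon p (k + 2) A).Quotient) = f 0 from (map_zero f).symm,
        pPow_mk'_eq_iff]
      exact ⟨b, by rw [sub_zero, hb, ← mul_assoc, ← pow_succ']⟩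
    have hp1 : p - 1 + 1 = p := Nat.succ_pred_eq_of_pos hp
    have main : f w ^ p * f a - f a * f w ^ p = 0 := by
      have hmain := pow_comm_aux hcomm hcomm' (p - 1)
      rw [hp1] at hmain
      rw [hmain, nsmul_eq_mul, ← mul_assoc, (Nat.cast_commute p (f w ^ (p - 1))).eq,
        mul_assoc, ← map_natCast f p, ← map_mul, hpe0, mul_zero]
    have : f (w ^ p * a) = f (a * w ^ p) := by
      rw [map_mul, map_mul, map_pow]
      exact sub_eq_zero.mp main
    obtain ⟨c, hc⟩ := (pPow_mk'_eq_iff _ _ _).mp this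
    refine ⟨c, ?_⟩
    rw [pow_succ p k, pow_mul, ← hw]
    exact hc

/-- Key lemma 2: `p`-power powers of congruent central lifts are congruent modulo
higher powers of `p`. -/
lemma lift_pow_congruent {z z' : A} (hp : 0 < p) (hz : CentralModP p z)
    (h : ∃ t, z' - z = (p : A) * t) :
    ∀ k : ℕ, ∃ s, z' ^ p ^ k - z ^ p ^ k = (p : A) ^ (k + 1) * s := by
  intro k
  induction k with
  | zero =>
    obtain ⟨t, ht⟩ := h
    exact ⟨t, by simpa using ht⟩
  | succ k ih =>
    set u := z ^ p ^ k with hu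
    set v := z' ^ p ^ k with hv
    obtain ⟨s, hs⟩ := ih
    have huc : CentralModP p u := hz.pow _
    set f := (pPowCon p (k + 2) A).mk' with hf
    -- `f u` commutes with `f (v - u)`
    have hcomm : Commute (f u) (f (v - u)) := by
      show f u * f (v - u) = f (v - u) * f u
      rw [← map_mul, ← map_mul, pPow_mk'_eq_iff]
      obtain ⟨c, hc⟩ := huc s
      refine ⟨c, ?_⟩
      have h1 : u * (v - u) - (v - u) * u = (p : A) ^ (k + 1) * (u * s - s * u) := by
        rw [hs]; exact pow_cast_mul_sub _ _ _
      rw [h1, hc, ← mul_assoc, ← pow_succ]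
    -- `f (v - u)` squares to zero
    have hsq : f (v - u) * f (v - u) = 0 := by
      rw [← map_mul, show (0 : (pPowCon p (k + 2) A).Quotient) = f 0 from (map_zero f).symm,
        pPow_mk'_eq_iff]
      refine ⟨(p : A) ^ k * (s * s), ?_⟩
      have h1 : (v - u) * (v - u) = (p : A) ^ (k + 1) * ((p : A) ^ (k + 1) * (s * s)) := by
        rw [hs, mul_assoc, ← mul_assoc s, ← cast_pow_comm (k + 1) s, mul_assoc]
      rw [sub_zero, h1, ← mul_assoc, ← pow_add]
      rw [show (k + 1) + (k + 1) = (k + 2) + k by omega, pow_add, mul_assoc]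
    -- `p * (v - u)` maps to zero
    have hpe0 : f ((p : A) * (v - u)) = 0 := by
      rw [show (0 : (pPowCon p (k + 2) A).Quotient) = f 0 from (map_zero f).symm,
        pPow_mk'_eq_iff]
      exact ⟨s, by rw [sub_zero, hs, ← mul_assoc, ← pow_succ']⟩
    -- binomial expansion
    have hv' : f v = f u + f (v - u) := by rw [← map_add, add_sub_cancel]
    have main : f v ^ p = f u ^ p := by
      rw [hv', hcomm.add_pow p, Finset.sum_range_succ]
      have hzero : ∀ m ∈ Finset.range p,
          f u ^ m * f (v - u) ^ (p - m) * (p.choose m : (pPowCon p (k + 2) A).Quotient)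
            = 0 := by
        intro m hm
        have hmlt : m < p := Finset.mem_range.mp hm
        rcases Nat.lt_or_ge m (p - 1) with h2 | h2
        · have h3 : p - m = 2 + (p - m - 2) := by omega
          rw [h3, pow_add, pow_two, hsq, zero_mul, mul_zero, zero_mul]
        · have hm1 : m = p - 1 := by omega
          have hpm : p - m = 1 := by omega
          have hch : p.choose m = p := by rw [hm1, Nat.choose_symm hp, Nat.choose_one_right]
          rw [hpm, pow_one, hch, mul_assoc, ← (Nat.cast_commute p (f (v - u))).eq,
            ← map_natCast f p, ← map_mul, hpe0, mul_zero]
      rw [Finset.sum_eq_zero hzero, zero_add, Nat.sub_self, pow_zero, mul_one,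
        Nat.choose_self, Nat.cast_one, mul_one]
    have : f (v ^ p) = f (u ^ p) := by rw [map_pow f v p, map_pow f u p, main]
    obtain ⟨c, hc⟩ := (pPow_mk'_eq_iff _ _ _).mp this
    refine ⟨c, ?_⟩
    rw [pow_succ p k, pow_mul, pow_mul, ← hu, ← hv]
    exact hc

end Aux

/-- Let `p` be an odd prime, `A` an associative ring in which `p` is not a zero divisor,
and `n ≥ 1`.  Let `z_1, …, z_n ∈ A/pA` be central, with two families of lifts
`z̃_i, z̃'_i ∈ A`.  Then `Σ_{i=1}^n p^{i-1} (z̃_i)^{p^{n-i}} ≡ Σ_{i=1}^n p^{i-1} (z̃'_i)^{p^{n-i}}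
mod p^n A`, and the common image of these sums in `A/p^n A` lies in the center `Z(A/p^n A)`.
(Here the family of lifts is indexed by `i : Fin n`, with `z̃_{i+1} = zt i`, so the sum is
`Σ_{i : Fin n} p^i (zt i)^{p^{n-1-i}}`.) -/
theorem stewart_vologodsky_sum_well_defined_and_central
    (p : ℕ) (hp : p.Prime) (hodd : Odd p) (A : Type*) [Ring A]
    (hA : ∀ a : A, (p : A) * a = 0 → a = 0)
    (n : ℕ) (hn : 1 ≤ n)
    (zt zt' : Fin n → A)
    (hcentral : ∀ i, (pPowCon p 1 A).mk' (zt i) ∈ Subring.center (pPowCon p 1 A).Quotient)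
    (hlift : ∀ i, (pPowCon p 1 A).mk' (zt i) = (pPowCon p 1 A).mk' (zt' i)) :
    (pPowCon p n A).mk' (∑ i : Fin n, (p : A) ^ (i : ℕ) * (zt i) ^ p ^ (n - 1 - (i : ℕ))) =
      (pPowCon p n A).mk' (∑ i : Fin n, (p : A) ^ (i : ℕ) * (zt' i) ^ p ^ (n - 1 - (i : ℕ))) ∧
    (pPowCon p n A).mk' (∑ i : Fin n, (p : A) ^ (i : ℕ) * (zt i) ^ p ^ (n - 1 - (i : ℕ))) ∈
      Subring.center (pPowCon p n A).Quotient := by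
  -- translate the hypotheses into elementwise statements in `A`
  have hc : ∀ i, CentralModP p (zt i) := by
    intro i a
    have h1 := Subring.mem_center_iff.mp (hcentral i) ((pPowCon p 1 A).mk' a)
    rw [← map_mul, ← map_mul, pPow_mk'_eq_iff] at h1
    obtain ⟨b, hb⟩ := h1
    rw [pow_one] at hb
    exact ⟨-b, by rw [mul_neg, ← hb]; abel⟩
  have hl : ∀ i, ∃ t, zt' i - zt i = (p : A) * t := by
    intro i
    obtain ⟨t, ht⟩ := (pPow_mk'_eq_iff 1 _ _).mp (hlift i).symm
    exact ⟨t, by rwa [pow_one] at ht⟩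
  constructor
  · rw [map_sum, map_sum]
    refine Finset.sum_congr rfl fun i _ => ?_
    rw [pPow_mk'_eq_iff]
    obtain ⟨s, hs⟩ := lift_pow_congruent hp.one_lt.le (hc i) (hl i) (n - 1 - (i : ℕ))
    refine ⟨-s, ?_⟩
    have harith : (i : ℕ) + (n - 1 - (i : ℕ) + 1) = n := by
      have := i.isLt; omega
    calc (p : A) ^ (i : ℕ) * zt i ^ p ^ (n - 1 - (i : ℕ))
          - (p : A) ^ (i : ℕ) * zt' i ^ p ^ (n - 1 - (i : ℕ))
        = -((p : A) ^ (i : ℕ)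
            * (zt' i ^ p ^ (n - 1 - (i : ℕ)) - zt i ^ p ^ (n - 1 - (i : ℕ)))) := by
          rw [mul_sub]; abel
      _ = -((p : A) ^ (i : ℕ) * ((p : A) ^ (n - 1 - (i : ℕ) + 1) * s)) := by rw [hs]
      _ = (p : A) ^ n * (-s) := by
          rw [← mul_assoc, ← pow_add, harith, mul_neg]
  · rw [Subring.mem_center_iff]
    intro g
    obtain ⟨a, rfl⟩ : ∃ a, (pPowCon p n A).mk' a = g :=
      Quotient.inductionOn' g fun a => ⟨a, rfl⟩
    rw [← map_mul, ← map_mul, pPow_mk'_eq_iff]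
    have key : ∀ i : Fin n, ∃ b,
        a * ((p : A) ^ (i : ℕ) * zt i ^ p ^ (n - 1 - (i : ℕ)))
          - (p : A) ^ (i : ℕ) * zt i ^ p ^ (n - 1 - (i : ℕ)) * a = (p : A) ^ n * b := by
      intro i
      obtain ⟨c, hcc⟩ := central_pow_comm hp.pos (hc i) (n - 1 - (i : ℕ)) a
      refine ⟨-c, ?_⟩
      have harith : (i : ℕ) + (n - 1 - (i : ℕ) + 1) = n := by
        have := i.isLt; omega
      calc a * ((p : A) ^ (i : ℕ) * zt i ^ p ^ (n - 1 - (i : ℕ)))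
            - (p : A) ^ (i : ℕ) * zt i ^ p ^ (n - 1 - (i : ℕ)) * a
          = (p : A) ^ (i : ℕ)
              * (a * zt i ^ p ^ (n - 1 - (i : ℕ)) - zt i ^ p ^ (n - 1 - (i : ℕ)) * a) :=
            pow_cast_mul_sub _ _ _
        _ = (p : A) ^ (i : ℕ) * (-((p : A) ^ (n - 1 - (i : ℕ) + 1) * c)) := by
            rw [← neg_sub, hcc]
        _ = (p : A) ^ n * (-c) := by
            rw [mul_neg, mul_neg, ← mul_assoc, ← pow_add, harith]
    choose b hb using key
    refine ⟨∑ i : Fin n, b i, ?_⟩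
    rw [Finset.mul_sum, Finset.sum_mul, ← Finset.sum_sub_distrib, Finset.mul_sum]
    exact Finset.sum_congr rfl fun i _ => hb i
end

section
/- Let p be a prime, let A be an associative ring, let n ≥ 1, and let z, z' ∈ A be such that z ≡ z' mod p^n A and the image of z in A/p^n A lies in the center Z(A/p^n A). Then z^p ≡ z'^p mod p^{n+1} A, and the image of z^p in A/p^{n+1} A lies in the center Z(A/p^{n+1} A). -/
/-AUX-/
lemma mem_span_pow_iff {A : Type*} [Ring A] (p k : ℕ) (x : A) :
    x ∈ TwoSidedIdeal.span {(p : A) ^ k} ↔ ∃ y, x = (p : A) ^ k * y := by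
  constructor
  · intro h
    let J : TwoSidedIdeal A := TwoSidedIdeal.mk' {x | ∃ y, x = (p : A) ^ k * y}
      ⟨0, (mul_zero _).symm⟩
      (fun ⟨y1, h1⟩ ⟨y2, h2⟩ => ⟨y1 + y2, by rw [h1, h2, mul_add]⟩)
      (fun ⟨y1, h1⟩ => ⟨-y1, by rw [h1, mul_neg]⟩)
      (fun {a b} ⟨y1, h1⟩ => ⟨a * y1, by
        rw [h1, ← mul_assoc, ← mul_assoc, ((Nat.cast_commute p a).pow_left k).eq]⟩)
      (fun {a b} ⟨y1, h1⟩ => ⟨y1 * b, by rw [h1, mul_assoc]⟩)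
    have := TwoSidedIdeal.mem_span_iff.mp h J (by
      intro s hs
      rw [Set.mem_singleton_iff] at hs
      subst hs
      rw [SetLike.mem_coe, TwoSidedIdeal.mem_mk']
      exact ⟨1, (mul_one _).symm⟩)
    rwa [TwoSidedIdeal.mem_mk'] at this
  · rintro ⟨y, rfl⟩
    exact TwoSidedIdeal.mul_mem_right _ _ _ (TwoSidedIdeal.subset_span rfl)

lemma pPowCon_mk'_eq_iff {A : Type*} [Ring A] (p k : ℕ) (x y : A) :
    (pPowCon p k A).mk' x = (pPowCon p k A).mk' y ↔ ∃ u, x - y = (p : A) ^ k * u := by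
  rw [← mem_span_pow_iff, ← TwoSidedIdeal.rel_iff]
  exact RingCon.eq _

/-- Key commutator lemma: if `z` is central mod `q`, then
`z^(m+1) a - a z^(m+1) = q ((m+1) • (c z^m) + q e)` for some `e`,
where `z a - a z = q c`. -/
lemma aux_comm {A : Type*} [Ring A] (q z : A) (hq : ∀ a : A, q * a = a * q)
    (hc : ∀ a : A, ∃ c, z * a - a * z = q * c) :
    ∀ (m : ℕ) (a c : A), z * a - a * z = q * c →
      ∃ e, z ^ (m + 1) * a - a * z ^ (m + 1)
        = q * ((m + 1 : ℕ) • (c * z ^ m) + q * e) := by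
  intro m
  induction m with
  | zero =>
    intro a c h
    exact ⟨0, by simpa using h⟩
  | succ m ih =>
    intro a c h
    obtain ⟨c', hc'⟩ := hc c
    obtain ⟨e, he⟩ := ih a c h
    obtain ⟨e', he'⟩ := ih c c' hc'
    refine ⟨e * z + (m + 1 : ℕ) • (c' * z ^ m) + q * e', ?_⟩
    have hza : z * a = a * z + q * c := by rw [← h]; abel
    have hz1 : z ^ (m + 1) * c = c * z ^ (m + 1)
        + q * ((m + 1 : ℕ) • (c' * z ^ m) + q * e') := by rw [← he']; abel
    have key : z ^ (m + 1 + 1) * a - a * z ^ (m + 1 + 1)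
        = (z ^ (m + 1) * a - a * z ^ (m + 1)) * z + z ^ (m + 1) * (q * c) := by
      calc z ^ (m + 1 + 1) * a - a * z ^ (m + 1 + 1)
          = z ^ (m + 1) * (z * a) - a * (z ^ (m + 1) * z) := by
            rw [pow_succ z (m + 1), mul_assoc]
        _ = z ^ (m + 1) * (a * z + q * c) - a * (z ^ (m + 1) * z) := by rw [hza]
        _ = _ := by noncomm_ring
    have hq1 : z ^ (m + 1) * (q * c) = q * (z ^ (m + 1) * c) := by
      rw [← mul_assoc, ← hq, mul_assoc]
    rw [key, hq1, he, hz1]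
    simp only [succ_nsmul, add_smul, one_smul, smul_mul_assoc, mul_add, add_mul, smul_add]
    simp only [mul_assoc, smul_mul_assoc, ← pow_succ]
    abel

/-- Expansion lemma: if `z` is central mod `q`, then
`(z + q u)^(m+1) = z^(m+1) + (m+1) • (q (u z^m)) + q² e`. -/
lemma aux_expand {A : Type*} [Ring A] (q z u : A) (hq : ∀ a : A, q * a = a * q)
    (hc : ∀ a : A, ∃ c, z * a - a * z = q * c) :
    ∀ m : ℕ, ∃ e, (z + q * u) ^ (m + 1)
      = z ^ (m + 1) + (m + 1 : ℕ) • (q * (u * z ^ m)) + q * (q * e) := by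
  have qmove : ∀ x y : A, x * (q * y) = q * (x * y) := fun x y => by
    rw [← mul_assoc, ← hq, mul_assoc]
  intro m
  induction m with
  | zero => exact ⟨0, by simp⟩
  | succ m ih =>
    obtain ⟨e, he⟩ := ih
    obtain ⟨cu, hcu⟩ := hc u
    obtain ⟨e', he'⟩ := aux_comm q z hq hc m u cu hcu
    refine ⟨(m + 1 : ℕ) • (cu * z ^ m) + q * e' + (m + 1 : ℕ) • (u * z ^ m * u)
      + e * z + e * (q * u), ?_⟩
    have h1 : z ^ (m + 1) * u = u * z ^ (m + 1)
        + q * ((m + 1 : ℕ) • (cu * z ^ m) + q * e') := by rw [← he']; abel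
    have hT2 : z ^ (m + 1) * (q * u) = q * (u * z ^ (m + 1))
        + q * (q * ((m + 1 : ℕ) • (cu * z ^ m) + q * e')) := by
      rw [qmove, h1, mul_add]
    have hT4 : q * (u * z ^ m) * (q * u) = q * (q * (u * z ^ m * u)) := by
      rw [mul_assoc, qmove, ← mul_assoc]
    have step : (z + q * u) ^ (m + 1 + 1)
        = (z ^ (m + 1) + (m + 1 : ℕ) • (q * (u * z ^ m)) + q * (q * e)) * (z + q * u) := by
      rw [pow_succ, he]
    rw [step]
    simp only [add_mul, smul_mul_assoc, mul_add, hT2, hT4]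
    rw [show z ^ (m + 1) * z = z ^ (m + 1 + 1) from (pow_succ z (m + 1)).symm]
    simp only [succ_nsmul, add_smul, one_smul, smul_add, mul_add, mul_assoc,
      smul_mul_assoc, ← pow_succ, mul_smul_comm]
    abel



/-- Let `p` be a prime, `A` an associative ring, `n ≥ 1`, and `z, z' ∈ A` with
`z ≡ z' mod p^n A` and the image of `z` in `A/p^n A` central.  Then
`z^p ≡ z'^p mod p^{n+1} A`, and the image of `z^p` in `A/p^{n+1} A` lies in the
center `Z(A/p^{n+1} A)`. -/
theorem pow_p_congruent_and_mem_center
    (p : ℕ) (hp : p.Prime) (A : Type*) [Ring A] (n : ℕ) (hn : 1 ≤ n) (z z' : A)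
    (hzz' : (pPowCon p n A).mk' z = (pPowCon p n A).mk' z')
    (hz : (pPowCon p n A).mk' z ∈ Subring.center (pPowCon p n A).Quotient) :
    (pPowCon p (n + 1) A).mk' (z ^ p) = (pPowCon p (n + 1) A).mk' (z' ^ p) ∧
    (pPowCon p (n + 1) A).mk' (z ^ p) ∈ Subring.center (pPowCon p (n + 1) A).Quotient := by
  set q : A := (p : A) ^ n with hqdef
  have hq : ∀ a : A, q * a = a * q := fun a => ((Nat.cast_commute p a).pow_left n).eq
  have qmove : ∀ x y : A, x * (q * y) = q * (x * y) := fun x y => by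
    rw [← mul_assoc, ← hq, mul_assoc]
  have hp1 : p - 1 + 1 = p := Nat.succ_pred_eq_of_pos hp.pos
  have key1 : ∀ w : A, (p : ℕ) • (q * w) = (p : A) ^ (n + 1) * w := fun w => by
    rw [nsmul_eq_mul, ← mul_assoc, hqdef, ← pow_succ']
  have key2 : ∀ w : A, q * (q * w) = (p : A) ^ (n + 1) * ((p : A) ^ (n - 1) * w) := by
    intro w
    rw [← mul_assoc, ← mul_assoc, hqdef, ← pow_add, ← pow_add,
      show n + n = n + 1 + (n - 1) by omega]
  -- z is central mod q
  have hc : ∀ a : A, ∃ c, z * a - a * z = q * c := by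
    intro a
    have h := Subring.mem_center_iff.mp hz ((pPowCon p n A).mk' a)
    have h2 : (pPowCon p n A).mk' (a * z) = (pPowCon p n A).mk' (z * a) := by
      rw [map_mul, map_mul, h]
    obtain ⟨u, hu⟩ := (pPowCon_mk'_eq_iff p n _ _).mp h2
    exact ⟨-u, by rw [mul_neg, ← hu]; abel⟩
  -- z = z' + q * u
  obtain ⟨u, hu⟩ := (pPowCon_mk'_eq_iff p n z z').mp hzz'
  have hz'' : z = z' + q * u := by rw [← hu]; abel
  -- z' is central mod q
  have hc' : ∀ a : A, ∃ c, z' * a - a * z' = q * c := by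
    intro a
    obtain ⟨c, hcz⟩ := hc a
    refine ⟨c - (u * a - a * u), ?_⟩
    have hz3 : z' = z - q * u := by rw [← hu]; abel
    calc z' * a - a * z'
        = (z * a - a * z) - (q * (u * a) - q * (a * u)) := by
          rw [hz3, sub_mul, mul_sub, mul_assoc, qmove]; abel
      _ = q * c - (q * (u * a) - q * (a * u)) := by rw [hcz]
      _ = q * (c - (u * a - a * u)) := by rw [mul_sub, mul_sub]
  constructor
  · -- congruence part
    obtain ⟨e, he⟩ := aux_expand q z' u hq hc' (p - 1)
    rw [hp1] at he
    refine (pPowCon_mk'_eq_iff p (n + 1) _ _).mpr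
      ⟨u * z' ^ (p - 1) + (p : A) ^ (n - 1) * e, ?_⟩
    rw [hz'', he, key1, key2, mul_add]
    abel
  · -- centrality part
    have hsurj : Function.Surjective ((pPowCon p (n + 1) A).mk') := fun g =>
      Quotient.inductionOn' g fun a => ⟨a, rfl⟩
    rw [Subring.mem_center_iff]
    intro g
    obtain ⟨a, rfl⟩ := hsurj g
    rw [← map_mul, ← map_mul]
    obtain ⟨c, hca⟩ := hc a
    obtain ⟨e, he2⟩ := aux_comm q z hq hc (p - 1) a c hca
    rw [hp1] at he2
    refine (pPowCon_mk'_eq_iff p (n + 1) _ _).mpr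
      ⟨-(c * z ^ (p - 1) + (p : A) ^ (n - 1) * e), ?_⟩
    have : z ^ p * a - a * z ^ p
        = (p : A) ^ (n + 1) * (c * z ^ (p - 1)) + (p : A) ^ (n + 1) * ((p : A) ^ (n - 1) * e) := by
      rw [he2, mul_add, mul_smul_comm, key1, key2]
    rw [mul_neg, mul_add, ← this]
    abel
end
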